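/- For the plane-fronted metric, the covariant derivative of k is curl-free, divergence-free and shear-free in the following sense, at every point of ℝ^n: (i) D_α k_β − D_β k_α = 0 for all α, β (so D_α k_β = D_β k_α); (ii) Σ_{α,β} g^{αβ} D_α k_β = 0; (iii) Σ_{α,β,γ,δ} g^{αγ} g^{βδ} (D_α k_β)(D_γ k_δ) = 0. -/

import Mathlib

noncomputable section

/-- Partial derivative of a function on `ℝ^n` in the `μ`-th coordinate direction. -/
def pd {n : ℕ} (μ : Fin n) (f : (Fin n → ℝ) → ℝ) : (Fin n → ℝ) → ℝ :=
  fun p => fderiv ℝ f p (Pi.single μ 1)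

/-- Embedding of a transverse index `a ∈ {0,…,m-1}` as the coordinate index `a+2`. -/
def tIdx {m : ℕ} (a : Fin m) : Fin (m + 2) := a.succ.succ

/-- Covariant components `g_{αβ}` of the plane-fronted metric. -/
def gLow (m : ℕ) (η : Matrix (Fin m) (Fin m) ℝ) (h : (Fin (m + 2) → ℝ) → ℝ)
    (p : Fin (m + 2) → ℝ) (α β : Fin (m + 2)) : ℝ :=
  (if (α = 0 ∧ β = 1) ∨ (α = 1 ∧ β = 0) then 1 else 0)
    + (if α = 1 ∧ β = 1 then 2 * h p else 0)
    + ∑ a : Fin m, ∑ b : Fin m, if α = tIdx a ∧ β = tIdx b then η a b else 0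

/-- Contravariant components `g^{αβ}` of the plane-fronted metric. -/
def gUp (m : ℕ) (ηinv : Matrix (Fin m) (Fin m) ℝ) (h : (Fin (m + 2) → ℝ) → ℝ)
    (p : Fin (m + 2) → ℝ) (α β : Fin (m + 2)) : ℝ :=
  (if (α = 0 ∧ β = 1) ∨ (α = 1 ∧ β = 0) then 1 else 0)
    + (if α = 0 ∧ β = 0 then -(2 * h p) else 0)
    + ∑ a : Fin m, ∑ b : Fin m, if α = tIdx a ∧ β = tIdx b then ηinv a b else 0

/-- Christoffel symbols `Γ^α_{βγ}` of the plane-fronted metric. -/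
def chr (m : ℕ) (η ηinv : Matrix (Fin m) (Fin m) ℝ) (h : (Fin (m + 2) → ℝ) → ℝ)
    (p : Fin (m + 2) → ℝ) (α β γ : Fin (m + 2)) : ℝ :=
  (1 / 2) * ∑ δ : Fin (m + 2), gUp m ηinv h p α δ *
    (pd β (fun q => gLow m η h q δ γ) p + pd γ (fun q => gLow m η h q δ β) p
      - pd δ (fun q => gLow m η h q β γ) p)

/-- Riemann curvature tensor `R^α_{βγδ}` of the plane-fronted metric. -/
def riem (m : ℕ) (η ηinv : Matrix (Fin m) (Fin m) ℝ) (h : (Fin (m + 2) → ℝ) → ℝ)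
    (p : Fin (m + 2) → ℝ) (α β γ δ : Fin (m + 2)) : ℝ :=
  pd γ (fun q => chr m η ηinv h q α δ β) p - pd δ (fun q => chr m η ηinv h q α γ β) p
    + ∑ ε : Fin (m + 2), (chr m η ηinv h p α γ ε * chr m η ηinv h p ε δ β
      - chr m η ηinv h p α δ ε * chr m η ηinv h p ε γ β)

/-- Ricci tensor `R_{βδ}` of the plane-fronted metric. -/
def ricci (m : ℕ) (η ηinv : Matrix (Fin m) (Fin m) ℝ) (h : (Fin (m + 2) → ℝ) → ℝ)
    (p : Fin (m + 2) → ℝ) (β δ : Fin (m + 2)) : ℝ :=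
  ∑ α : Fin (m + 2), riem m η ηinv h p α β α δ

/-- Contravariant components `k^α = δ^α_0` of the null vector `k`. -/
def kUp {m : ℕ} (α : Fin (m + 2)) : ℝ := if α = 0 then 1 else 0

/-- Covariant components `k_α = δ^1_α` of the null vector `k`. -/
def kDown {m : ℕ} (α : Fin (m + 2)) : ℝ := if α = 1 then 1 else 0

/-- Covariant derivative `D_α k_β = −Σ_γ Γ^γ_{αβ} k_γ` of the constant-component
null covector `k`. -/
def covDk (m : ℕ) (η ηinv : Matrix (Fin m) (Fin m) ℝ) (h : (Fin (m + 2) → ℝ) → ℝ)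
    (p : Fin (m + 2) → ℝ) (α β : Fin (m + 2)) : ℝ :=
  - ∑ γ : Fin (m + 2), chr m η ηinv h p γ α β * kDown γ

@[simp] lemma zero_ne_tIdx {m : ℕ} (a : Fin m) : ((0 : Fin (m + 2)) = tIdx a) ↔ False := by
  simp only [tIdx, Fin.ext_iff, Fin.val_succ, Fin.val_zero, iff_false]
  omega

@[simp] lemma one_ne_tIdx {m : ℕ} (a : Fin m) : ((1 : Fin (m + 2)) = tIdx a) ↔ False := by
  simp only [tIdx, Fin.ext_iff, Fin.val_succ, Fin.val_one, iff_false]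
  omega

@[simp] lemma fone_ne_zero {m : ℕ} : ((1 : Fin (m + 2)) = 0) ↔ False := by
  simp [Fin.ext_iff]

lemma pd_gLow (m : ℕ) (η : Matrix (Fin m) (Fin m) ℝ) (h : (Fin (m + 2) → ℝ) → ℝ)
    (hh : ContDiff ℝ (⊤ : ℕ∞) h) (p : Fin (m + 2) → ℝ) (μ δ γ : Fin (m + 2)) :
    pd μ (fun q => gLow m η h q δ γ) p = if δ = 1 ∧ γ = 1 then 2 * pd μ h p else 0 := by
  have hdiff : DifferentiableAt ℝ h p := (hh.differentiable (by simp)).differentiableAt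
  by_cases hc : δ = 1 ∧ γ = 1
  · obtain ⟨rfl, rfl⟩ := hc
    have hf : (fun q => gLow m η h q 1 1) = fun q => 2 * h q := by
      funext q
      simp [gLow]
    rw [if_pos ⟨rfl, rfl⟩, hf]
    unfold pd
    rw [fderiv_const_mul hdiff]
    simp [pd]
  · have hf : (fun q => gLow m η h q δ γ) = fun _ => gLow m η h p δ γ := by
      funext q
      simp [gLow, hc]
    rw [if_neg hc, hf]
    simp [pd]

lemma gUp_one (m : ℕ) (ηinv : Matrix (Fin m) (Fin m) ℝ) (h : (Fin (m + 2) → ℝ) → ℝ)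
    (p : Fin (m + 2) → ℝ) (δ : Fin (m + 2)) :
    gUp m ηinv h p 1 δ = if δ = 0 then 1 else 0 := by
  by_cases hδ : δ = 0 <;> simp [gUp, hδ]

lemma chr_one (m : ℕ) (η ηinv : Matrix (Fin m) (Fin m) ℝ) (h : (Fin (m + 2) → ℝ) → ℝ)
    (hh : ContDiff ℝ (⊤ : ℕ∞) h) (p : Fin (m + 2) → ℝ) (α β : Fin (m + 2)) :
    chr m η ηinv h p 1 α β = if α = 1 ∧ β = 1 then -(pd 0 h p) else 0 := by
  unfold chr
  simp only [gUp_one, ite_mul, one_mul, zero_mul, Finset.sum_ite_eq', Finset.mem_univ,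
    if_true, pd_gLow m η h hh]
  by_cases hc : α = 1 ∧ β = 1
  · obtain ⟨rfl, rfl⟩ := hc
    simp
  · simp [hc]

lemma covDk_eq (m : ℕ) (η ηinv : Matrix (Fin m) (Fin m) ℝ) (h : (Fin (m + 2) → ℝ) → ℝ)
    (hh : ContDiff ℝ (⊤ : ℕ∞) h) (p : Fin (m + 2) → ℝ) (α β : Fin (m + 2)) :
    covDk m η ηinv h p α β = if α = 1 ∧ β = 1 then pd 0 h p else 0 := by
  unfold covDk kDown
  simp only [mul_ite, mul_one, mul_zero, Finset.sum_ite_eq', Finset.mem_univ, if_true,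
    chr_one m η ηinv h hh]
  by_cases hc : α = 1 ∧ β = 1 <;> simp [hc]

/-- for the plane-fronted metric, `D k` is (i) curl-free,
(ii) divergence-free and (iii) shear-free. -/
theorem stmt3 (m : ℕ) (hm : 1 ≤ m) (η ηinv : Matrix (Fin m) (Fin m) ℝ)
    (hηsymm : η.IsSymm) (hη : η * ηinv = 1) (hη' : ηinv * η = 1)
    (h : (Fin (m + 2) → ℝ) → ℝ) (hh : ContDiff ℝ (⊤ : ℕ∞) h) :
    (∀ (p : Fin (m + 2) → ℝ) (α β : Fin (m + 2)),
      covDk m η ηinv h p α β - covDk m η ηinv h p β α = 0)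
    ∧ (∀ p : Fin (m + 2) → ℝ,
      ∑ α : Fin (m + 2), ∑ β : Fin (m + 2),
        gUp m ηinv h p α β * covDk m η ηinv h p α β = 0)
    ∧ (∀ p : Fin (m + 2) → ℝ,
      ∑ α : Fin (m + 2), ∑ β : Fin (m + 2), ∑ γ : Fin (m + 2), ∑ δ : Fin (m + 2),
        gUp m ηinv h p α γ * gUp m ηinv h p β δ
          * covDk m η ηinv h p α β * covDk m η ηinv h p γ δ = 0) := by
  have g11 : ∀ p : Fin (m + 2) → ℝ, gUp m ηinv h p 1 1 = 0 := by
    intro p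
    simp [gUp_one]
  refine ⟨?_, ?_, ?_⟩
  · intro p α β
    simp only [covDk_eq m η ηinv h hh]
    by_cases hα : α = 1 <;> by_cases hβ : β = 1 <;> simp [hα, hβ]
  · intro p
    simp only [covDk_eq m η ηinv h hh, mul_ite, mul_zero, ite_and]
    simp [Finset.sum_ite_eq', g11]
  · intro p
    simp only [covDk_eq m η ηinv h hh, mul_ite, mul_zero, ite_mul, zero_mul, ite_and]
    simp [Finset.sum_ite_eq', g11]
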